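/- arXiv:1803.07039 — 4 statements merged into one kernel-verified Lean document; each statement's English description precedes it below -/
import Mathlib

section
/- Let d ≥ 1, let S be the swap operator on ℂ^d ⊗ ℂ^d, and let ρ, σ be density matrices on ℂ^d. For every real θ, tr₂( exp(−iθS)·(σ ⊗ ρ)·exp(iθS) ) = cos²(θ)·σ + sin²(θ)·ρ − i·cos(θ)sin(θ)·(ρσ − σρ). -/
open Matrix Kronecker
open scoped ComplexOrder

/-- The swap operator `S` on `ℂ^d ⊗ ℂ^d`, with entries
`S_{(i,j),(k,l)} = δ_{il} δ_{jk}`. -/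
def swapOp (d : ℕ) : Matrix (Fin d × Fin d) (Fin d × Fin d) ℂ :=
  Matrix.of fun p q => if p.1 = q.2 ∧ p.2 = q.1 then 1 else 0

/-- The partial trace over the second tensor factor:
`(tr₂ X)_{ik} = Σ_j X_{(i,j),(k,j)}`. -/
noncomputable def ptraceRight {α : Type*} [Fintype α] {d : ℕ}
    (X : Matrix (α × Fin d) (α × Fin d) ℂ) : Matrix α α ℂ :=
  Matrix.of fun i k => ∑ j, X (i, j) (k, j)

/-- A density matrix: positive semidefinite with unit trace. -/
def IsDensityMatrix {n : Type*} [Fintype n] (ρ : Matrix n n ℂ) : Prop :=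
  ρ.PosSemidef ∧ ρ.trace = 1

/-!
Since `S * S = 1`, the exponential series collapses to `exp (±iθ S) = cos θ ± i sin θ S`, so the
conjugated state is a combination of `σ ⊗ ρ`, `(σ ⊗ ρ) S`, `S (σ ⊗ ρ)` and `S (σ ⊗ ρ) S = ρ ⊗ σ`.
Their partial traces are `(tr ρ) σ`, `σ ρ`, `ρ σ` and `(tr σ) ρ`, where `tr ρ = tr σ = 1`.
-/

theorem exp_smul_of_mul_self_eq_one {A : Type*} [NormedRing A] [NormedAlgebra ℂ A]
    [CompleteSpace A] {S : A} (hS : S * S = 1) (z : ℂ) :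
    NormedSpace.exp (z • S) = Complex.cosh z • (1 : A) + Complex.sinh z • S := by
  have hpow_even (k : ℕ) : S ^ (2 * k) = 1 := by rw [pow_mul, sq, hS, one_pow]
  have hpow_odd (k : ℕ) : S ^ (2 * k + 1) = S := by rw [pow_succ, hpow_even, one_mul]
  have hseries : HasSum (fun n : ℕ => (z ^ n / n.factorial) • S ^ n)
      (Complex.cosh z • (1 : A) + Complex.sinh z • S) := by
    refine HasSum.even_add_odd ?_ ?_
    · simpa only [hpow_even] using (Complex.hasSum_cosh z).smul_const (1 : A)
    · simpa only [hpow_odd] using (Complex.hasSum_sinh z).smul_const S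
  refine (NormedSpace.exp_series_hasSum_exp' (𝕂 := ℂ) (z • S)).unique ?_
  simpa only [smul_pow, smul_smul, div_eq_inv_mul] using hseries

theorem exp_I_mul_smul_of_mul_self_eq_one {A : Type*} [NormedRing A] [NormedAlgebra ℂ A]
    [CompleteSpace A] {S : A} (hS : S * S = 1) (z : ℂ) :
    NormedSpace.exp ((Complex.I * z) • S) =
      Complex.cos z • (1 : A) + (Complex.I * Complex.sin z) • S := by
  rw [exp_smul_of_mul_self_eq_one hS, mul_comm, Complex.cosh_mul_I, Complex.sinh_mul_I, mul_comm]

theorem smul_one_sub_smul_mul_mul_smul_one_add_smul {R A : Type*} [CommRing R] [Ring A]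
    [Algebra R A] (c t : R) (S X : A) :
    (c • 1 - t • S) * X * (c • 1 + t • S) =
      (c * c) • X + (c * t) • (X * S - S * X) - (t * t) • (S * X * S) := by
  simp only [sub_mul, mul_add, smul_mul_assoc, mul_smul_comm, one_mul, mul_one, smul_sub,
    smul_smul]
  module

section ptraceRight

variable {α : Type*} [Fintype α] {d : ℕ}

@[simp]
theorem ptraceRight_add (X Y : Matrix (α × Fin d) (α × Fin d) ℂ) :
    ptraceRight (X + Y) = ptraceRight X + ptraceRight Y := by
  ext i k
  simp [ptraceRight, Finset.sum_add_distrib]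

@[simp]
theorem ptraceRight_sub (X Y : Matrix (α × Fin d) (α × Fin d) ℂ) :
    ptraceRight (X - Y) = ptraceRight X - ptraceRight Y := by
  ext i k
  simp [ptraceRight, Finset.sum_sub_distrib]

@[simp]
theorem ptraceRight_smul (c : ℂ) (X : Matrix (α × Fin d) (α × Fin d) ℂ) :
    ptraceRight (c • X) = c • ptraceRight X := by
  ext i k
  simp [ptraceRight, Finset.mul_sum]

theorem ptraceRight_kronecker (A : Matrix α α ℂ) (B : Matrix (Fin d) (Fin d) ℂ) :
    ptraceRight (A ⊗ₖ B) = B.trace • A := by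
  ext i k
  simp [ptraceRight, Matrix.trace, Finset.mul_sum, mul_comm]

end ptraceRight

section swapOp

variable {d : ℕ}

theorem swapOp_mul_apply (X : Matrix (Fin d × Fin d) (Fin d × Fin d) ℂ) (p q : Fin d × Fin d) :
    (swapOp d * X) p q = X p.swap q := by
  rw [Matrix.mul_apply, Finset.sum_eq_single p.swap]
  · simp [swapOp]
  · rintro r - hr
    simp only [swapOp, Matrix.of_apply]
    rw [if_neg fun h => hr (Prod.ext h.2.symm h.1.symm), zero_mul]
  · simp

theorem mul_swapOp_apply (X : Matrix (Fin d × Fin d) (Fin d × Fin d) ℂ) (p q : Fin d × Fin d) :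
    (X * swapOp d) p q = X p q.swap := by
  rw [Matrix.mul_apply, Finset.sum_eq_single q.swap]
  · simp [swapOp]
  · rintro r - hr
    simp only [swapOp, Matrix.of_apply]
    rw [if_neg fun h => hr (Prod.ext h.1 h.2), mul_zero]
  · simp

theorem swapOp_mul_self : swapOp d * swapOp d = 1 := by
  ext p q
  rw [swapOp_mul_apply]
  simp [swapOp, Matrix.one_apply, Prod.ext_iff, and_comm, eq_comm]

theorem swapOp_mul_kronecker_mul_swapOp (A B : Matrix (Fin d) (Fin d) ℂ) :
    swapOp d * (A ⊗ₖ B) * swapOp d = B ⊗ₖ A := by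
  ext p q
  simp [mul_swapOp_apply, swapOp_mul_apply, mul_comm]

theorem ptraceRight_kronecker_mul_swapOp (A B : Matrix (Fin d) (Fin d) ℂ) :
    ptraceRight ((A ⊗ₖ B) * swapOp d) = A * B := by
  ext i k
  simp only [ptraceRight, Matrix.of_apply, mul_swapOp_apply, Matrix.kroneckerMap_apply]
  rfl

theorem ptraceRight_swapOp_mul_kronecker (A B : Matrix (Fin d) (Fin d) ℂ) :
    ptraceRight (swapOp d * (A ⊗ₖ B)) = B * A := by
  ext i k
  simp only [ptraceRight, Matrix.of_apply, swapOp_mul_apply, Matrix.kroneckerMap_apply,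
    Prod.fst_swap, Prod.snd_swap]
  rw [Matrix.mul_apply]
  exact Finset.sum_congr rfl fun j _ => mul_comm _ _

theorem exp_I_mul_smul_swapOp (z : ℂ) :
    NormedSpace.exp ((Complex.I * z) • swapOp d) =
      Complex.cos z • (1 : Matrix (Fin d × Fin d) (Fin d × Fin d) ℂ) +
        (Complex.I * Complex.sin z) • swapOp d := by
  -- `exp` depends only on the topology, so any Banach algebra norm on matrices will do.
  let := Matrix.linftyOpNormedRing (n := Fin d × Fin d) (α := ℂ)
  let := Matrix.linftyOpNormedAlgebra (n := Fin d × Fin d) (R := ℂ) (α := ℂ)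
  exact exp_I_mul_smul_of_mul_self_eq_one swapOp_mul_self z

end swapOp

theorem ptraceRight_partialSwap_conj_general (d : ℕ)
    (ρ σ : Matrix (Fin d) (Fin d) ℂ)
    (hρ : IsDensityMatrix ρ) (hσ : IsDensityMatrix σ) (θ : ℝ) :
    ptraceRight
        (NormedSpace.exp ((-(Complex.I * (θ : ℂ))) • swapOp d) * (σ ⊗ₖ ρ) *
          NormedSpace.exp ((Complex.I * (θ : ℂ)) • swapOp d)) =
      ((Real.cos θ : ℂ) ^ 2) • σ + ((Real.sin θ : ℂ) ^ 2) • ρ -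
        (Complex.I * (Real.cos θ : ℂ) * (Real.sin θ : ℂ)) • (ρ * σ - σ * ρ) := by
  obtain ⟨-, hρ_trace⟩ := hρ
  obtain ⟨-, hσ_trace⟩ := hσ
  have hexp_neg : NormedSpace.exp ((-(Complex.I * (θ : ℂ))) • swapOp d) =
      Complex.cos θ • 1 - (Complex.I * Complex.sin θ) • swapOp d := by
    rw [neg_mul_eq_mul_neg, exp_I_mul_smul_swapOp, Complex.cos_neg, Complex.sin_neg, mul_neg,
      neg_smul, sub_eq_add_neg]
  have hI : Complex.I * Complex.sin θ * (Complex.I * Complex.sin θ) = -Complex.sin θ ^ 2 := by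
    linear_combination Complex.sin θ ^ 2 * Complex.I_sq
  rw [hexp_neg, exp_I_mul_smul_swapOp, smul_one_sub_smul_mul_mul_smul_one_add_smul,
    swapOp_mul_kronecker_mul_swapOp]
  simp only [ptraceRight_sub, ptraceRight_add, ptraceRight_smul, ptraceRight_kronecker,
    ptraceRight_kronecker_mul_swapOp, ptraceRight_swapOp_mul_kronecker, hρ_trace, hσ_trace,
    one_smul, hI]
  push_cast
  module

/-- `tr₂(exp(−iθS)(σ ⊗ ρ)exp(iθS)) = cos²θ·σ + sin²θ·ρ − i cosθ sinθ (ρσ − σρ)`. -/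
theorem ptraceRight_partialSwap_conj (d : ℕ) (hd : 1 ≤ d)
    (ρ σ : Matrix (Fin d) (Fin d) ℂ)
    (hρ : IsDensityMatrix ρ) (hσ : IsDensityMatrix σ) (θ : ℝ) :
    ptraceRight
        (NormedSpace.exp ((-(Complex.I * (θ : ℂ))) • swapOp d) * (σ ⊗ₖ ρ) *
          NormedSpace.exp ((Complex.I * (θ : ℂ)) • swapOp d)) =
      ((Real.cos θ : ℂ) ^ 2) • σ + ((Real.sin θ : ℂ) ^ 2) • ρ -
        (Complex.I * (Real.cos θ : ℂ) * (Real.sin θ : ℂ)) • (ρ * σ - σ * ρ) :=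
  ptraceRight_partialSwap_conj_general d ρ σ hρ hσ θ
end

section
/- Let H₁, …, H_K be Hermitian D×D complex matrices, let Λ = Σ_{k=1}^{K} ‖H_k‖ (operator norms), and let n ≥ 1 be an integer. Then ‖ ( exp(−iH₁/n)·exp(−iH₂/n)·⋯·exp(−iH_K/n) )^n − exp( −i(H₁ + ⋯ + H_K) ) ‖ ≤ (Λ² / n)·e^{Λ/n}. -/
/-!
All the exponentials involved are unitary, so the telescoping bound `‖Aⁿ - Bⁿ‖ ≤ n ‖A - B‖` for
contractions reduces the claim to one Trotter step `A = ∏ₖ exp xₖ`, `B = exp (∑ₖ xₖ)` with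
`xₖ = -(i/n) Hₖ`. Both `A` and `B` agree with `1 + ∑ₖ xₖ` up to a remainder of norm at most
`φ(σ) = e^σ - 1 - σ`, where `σ = ∑ₖ ‖xₖ‖ = Λ/n`; comparing exponential series termwise gives
`φ(σ) ≤ σ²/2 · e^σ`, so `‖Aⁿ - Bⁿ‖ ≤ 2n φ(Λ/n) ≤ (Λ²/n) e^{Λ/n}`.
-/

open NormedSpace Nat

namespace NormedSpace

section ExpRemainder

variable {𝔸 : Type*} [NormedRing 𝔸] [NormedAlgebra ℚ 𝔸]

theorem norm_inv_factorial_smul_le {y : 𝔸} {s : ℝ} (hy : ‖y‖ ≤ s) (k : ℕ) :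
    ‖(k ! : ℚ)⁻¹ • y‖ ≤ (k ! : ℚ)⁻¹ • s := by
  rw [norm_smul, Rat.smul_def, ← Rat.norm_cast_real, Real.norm_of_nonneg (by positivity)]
  gcongr

variable [CompleteSpace 𝔸]

theorem hasSum_exp_sub_one_sub (x : 𝔸) :
    HasSum (fun k : ℕ => ((k + 2)! : ℚ)⁻¹ • x ^ (k + 2)) (exp x - 1 - x) := by
  have h := (hasSum_nat_add_iff' 2).mpr (exp_series_hasSum_exp' (𝕂 := ℚ) x)
  simpa [Finset.sum_range_succ, sub_sub] using h

theorem norm_exp_sub_one_sub_le {x : 𝔸} {s : ℝ} (hx : ‖x‖ ≤ s) :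
    ‖exp x - 1 - x‖ ≤ Real.exp s - 1 - s :=
  (hasSum_exp_sub_one_sub x).norm_le_of_bounded
    (Real.exp_eq_exp_ℝ ▸ hasSum_exp_sub_one_sub s) fun k =>
      norm_inv_factorial_smul_le
        ((norm_pow_le' x (k + 1).succ_pos).trans (pow_le_pow_left₀ (norm_nonneg x) hx _)) _

theorem norm_exp_le [NormOneClass 𝔸] {x : 𝔸} {s : ℝ} (hx : ‖x‖ ≤ s) :
    ‖exp x‖ ≤ Real.exp s :=
  (exp_series_hasSum_exp' (𝕂 := ℚ) x).norm_le_of_bounded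
    (Real.exp_eq_exp_ℝ ▸ exp_series_hasSum_exp' (𝕂 := ℚ) s) fun k =>
      norm_inv_factorial_smul_le
        ((norm_pow_le x k).trans (pow_le_pow_left₀ (norm_nonneg x) hx _)) _

end ExpRemainder

end NormedSpace

theorem Real.exp_sub_one_sub_le {s : ℝ} (hs : 0 ≤ s) :
    Real.exp s - 1 - s ≤ s ^ 2 / 2 * Real.exp s := by
  refine hasSum_le (fun k => ?_) (Real.exp_eq_exp_ℝ ▸ hasSum_exp_sub_one_sub s)
    ((Real.exp_eq_exp_ℝ ▸ exp_series_hasSum_exp' (𝕂 := ℚ) s).mul_left (s ^ 2 / 2))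
  simp only [Rat.smul_def, Rat.cast_inv, Rat.cast_natCast]
  have hfact : 2 * k ! ≤ (k + 2)! := Nat.mul_le_mul (by omega) (Nat.factorial_le (by omega))
  calc ((k + 2)! : ℝ)⁻¹ * s ^ (k + 2) ≤ (2 * k ! : ℝ)⁻¹ * s ^ (k + 2) := by
        gcongr; exact_mod_cast hfact
    _ = s ^ 2 / 2 * ((k ! : ℝ)⁻¹ * s ^ k) := by ring

theorem norm_pow_sub_pow_le {R : Type*} [NormedRing R] [NormOneClass R] {a b : R}
    (ha : ‖a‖ ≤ 1) (hb : ‖b‖ ≤ 1) (n : ℕ) : ‖a ^ n - b ^ n‖ ≤ n * ‖a - b‖ := by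
  induction n with
  | zero => simp
  | succ n ih =>
    have hsplit : a ^ (n + 1) - b ^ (n + 1) = a ^ n * (a - b) + (a ^ n - b ^ n) * b := by
      noncomm_ring
    have han : ‖a ^ n‖ ≤ 1 := (norm_pow_le a n).trans (pow_le_one₀ (norm_nonneg a) ha)
    calc ‖a ^ (n + 1) - b ^ (n + 1)‖
        ≤ 1 * ‖a - b‖ + n * ‖a - b‖ * 1 := by
          rw [hsplit]
          exact (norm_add_le _ _).trans
            (add_le_add (norm_mul_le_of_le han le_rfl) (norm_mul_le_of_le ih hb))
      _ = (n + 1 : ℕ) * ‖a - b‖ := by push_cast; ring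

namespace List

theorem norm_sum_le {E : Type*} [SeminormedAddCommGroup E] (L : List E) :
    ‖L.sum‖ ≤ (L.map norm).sum :=
  L.le_sum_of_subadditive norm norm_zero.le norm_add_le

section ExpProduct

variable {𝔸 : Type*} [NormedRing 𝔸] [NormOneClass 𝔸] [NormedAlgebra ℚ 𝔸] [CompleteSpace 𝔸]

theorem norm_prod_exp_le (L : List 𝔸) : ‖(L.map exp).prod‖ ≤ Real.exp (L.map norm).sum := by
  induction L with
  | nil => simp
  | cons x L ih =>
    rw [map_cons, prod_cons, map_cons, sum_cons, Real.exp_add]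
    exact (norm_mul_le _ _).trans (by gcongr; exact norm_exp_le le_rfl)

theorem norm_prod_exp_sub_one_sub_sum_le (L : List 𝔸) :
    ‖(L.map exp).prod - 1 - L.sum‖ ≤ Real.exp (L.map norm).sum - 1 - (L.map norm).sum := by
  induction L with
  | nil => simp
  | cons x L ih =>
    simp only [map_cons, prod_cons, sum_cons]
    set P := (L.map exp).prod
    set S := L.sum
    set σ := (L.map norm).sum
    have hsplit : exp x * P - 1 - (x + S) =
        (exp x - 1 - x) * P + ((1 + x) * (P - 1 - S) + x * S) := by
      noncomm_ring
    have h1x : ‖1 + x‖ ≤ 1 + ‖x‖ := (norm_add_le _ _).trans_eq (by rw [norm_one])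
    -- `φ(s) = exp s - 1 - s` obeys `φ(a + b) = φ(a) exp b + (1 + a) φ(b) + a b`, the scalar
    -- shadow of `hsplit`, so the bound propagates exactly.
    calc ‖exp x * P - 1 - (x + S)‖
        ≤ ‖(exp x - 1 - x) * P‖ + (‖(1 + x) * (P - 1 - S)‖ + ‖x * S‖) := by
          rw [hsplit]
          exact (norm_add_le _ _).trans (by gcongr; exact norm_add_le _ _)
      _ ≤ (Real.exp ‖x‖ - 1 - ‖x‖) * Real.exp σ +
            ((1 + ‖x‖) * (Real.exp σ - 1 - σ) + ‖x‖ * σ) :=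
          add_le_add (norm_mul_le_of_le (norm_exp_sub_one_sub_le le_rfl) L.norm_prod_exp_le)
            (add_le_add (norm_mul_le_of_le h1x ih) (norm_mul_le_of_le le_rfl L.norm_sum_le))
      _ = Real.exp (‖x‖ + σ) - 1 - (‖x‖ + σ) := by
          rw [Real.exp_add]; ring

theorem norm_prod_exp_sub_exp_sum_le (L : List 𝔸) :
    ‖(L.map exp).prod - exp L.sum‖ ≤
      2 * (Real.exp (L.map norm).sum - 1 - (L.map norm).sum) := by
  calc ‖(L.map exp).prod - exp L.sum‖
      = ‖((L.map exp).prod - 1 - L.sum) - (exp L.sum - 1 - L.sum)‖ := by congr 1; abel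
    _ ≤ ‖(L.map exp).prod - 1 - L.sum‖ + ‖exp L.sum - 1 - L.sum‖ := norm_sub_le _ _
    _ ≤ _ := by
        linarith [L.norm_prod_exp_sub_one_sub_sum_le, norm_exp_sub_one_sub_le L.norm_sum_le]

end ExpProduct

theorem norm_prod_exp_pow_sub_exp_nsmul_sum_le {𝔸 : Type*} [NormedRing 𝔸] [StarRing 𝔸]
    [CStarRing 𝔸] [Nontrivial 𝔸] [NormedAlgebra ℚ 𝔸] [CompleteSpace 𝔸] (L : List 𝔸)
    (hL : ∀ x ∈ L, x ∈ skewAdjoint 𝔸) (n : ℕ) :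
    ‖(L.map exp).prod ^ n - exp (n • L.sum)‖ ≤
      n * (2 * (Real.exp (L.map norm).sum - 1 - (L.map norm).sum)) := by
  have hprod : (L.map exp).prod ∈ unitary 𝔸 :=
    Submonoid.list_prod_mem _
      (by simpa using fun x hx => exp_mem_unitary_of_mem_skewAdjoint (hL x hx))
  have hsum : exp L.sum ∈ unitary 𝔸 :=
    exp_mem_unitary_of_mem_skewAdjoint (AddSubgroup.list_sum_mem _ hL)
  rw [exp_nsmul]
  exact (norm_pow_sub_pow_le (CStarRing.norm_of_mem_unitary hprod).le
    (CStarRing.norm_of_mem_unitary hsum).le n).trans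
      (by gcongr; exact L.norm_prod_exp_sub_exp_sum_le)

end List

open Matrix
open scoped Matrix.Norms.L2Operator

/-- Quantitative Lie–Trotter product bound: for Hermitian `H₁, …, H_K` with
`Λ = Σ_k ‖H_k‖` (ℓ²→ℓ² operator norms) and `n ≥ 1`,
`‖(exp(−iH₁/n)⋯exp(−iH_K/n))^n − exp(−i(H₁+⋯+H_K))‖ ≤ (Λ²/n)·e^{Λ/n}`. -/
theorem lie_trotter_bound (D K : ℕ) (H : Fin K → Matrix (Fin D) (Fin D) ℂ)
    (hH : ∀ k, (H k).IsHermitian) (n : ℕ) (hn : 1 ≤ n) :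
    ‖((List.ofFn fun k =>
          NormedSpace.exp ((-(Complex.I / (n : ℂ))) • H k)).prod) ^ n -
        NormedSpace.exp ((-Complex.I) • ∑ k, H k)‖ ≤
      ((∑ k, ‖H k‖) ^ 2 / (n : ℝ)) * Real.exp ((∑ k, ‖H k‖) / (n : ℝ)) := by
  rcases isEmpty_or_nonempty (Fin D) with hD | hD
  · rw [Subsingleton.elim (_ - _) 0, norm_zero]
    positivity
  let +nondep : NormedAlgebra ℚ (Matrix (Fin D) (Fin D) ℂ) := .restrictScalars ℚ ℂ _
  set c : ℂ := -(Complex.I / n)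
  set Λ := ∑ k, ‖H k‖
  set L := List.ofFn fun k => c • H k
  have hskew : ∀ x ∈ L, x ∈ skewAdjoint (Matrix (Fin D) (Fin D) ℂ) := by
    simp only [L, List.mem_ofFn, forall_exists_index]
    rintro _ k rfl
    exact (hH k).isSelfAdjoint.smul_mem_skewAdjoint
      (by simp [c, skewAdjoint.mem_iff, Complex.conj_I, neg_div])
  have hsum : n • L.sum = (-Complex.I) • ∑ k, H k := by
    have hn' : (n : ℂ) ≠ 0 := by exact_mod_cast (show n ≠ 0 by omega)
    rw [List.sum_ofFn, ← Finset.smul_sum, ← Nat.cast_smul_eq_nsmul ℂ, smul_smul]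
    congr 1
    simp only [c]
    field_simp
  have hnorm : (L.map norm).sum = Λ / n := by
    rw [List.map_ofFn, List.sum_ofFn, Finset.sum_div]
    simp [c, norm_smul, div_eq_inv_mul]
  calc _ = ‖(L.map exp).prod ^ n - exp (n • L.sum)‖ := by rw [hsum, List.map_ofFn]; rfl
    _ ≤ n * (2 * (Real.exp (Λ / n) - 1 - Λ / n)) :=
        hnorm ▸ L.norm_prod_exp_pow_sub_exp_nsmul_sum_le hskew n
    _ ≤ n * (2 * ((Λ / n) ^ 2 / 2 * Real.exp (Λ / n))) := by
        gcongr; exact Real.exp_sub_one_sub_le (by positivity)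
    _ = Λ ^ 2 / n * Real.exp (Λ / n) := by field_simp
end

section
/- Let x⁽¹⁾, …, x⁽ᴹ⁾ be unit vectors in ℂ^d, let ρ = (1/M)·Σ_{m=1}^{M} x⁽ᵐ⁾(x⁽ᵐ⁾)† be their statistical ensemble, let t be real and n ≥ 1 an integer, and for each m define the unitary U_m = P₀ ⊗ I_d + P₁ ⊗ exp( −i·(t/(nM))·x⁽ᵐ⁾(x⁽ᵐ⁾)† ) on ℂ² ⊗ ℂ^d. Then ‖ (U_M·U_{M−1}·⋯·U₁)^n − exp( −i·t·(P₁ ⊗ ρ) ) ‖ ≤ (t²/n)·e^{|t|}. -/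
open Matrix Kronecker
open scoped Matrix.Norms.L2Operator

/-- The projector `|0⟩⟨0| = diag(1,0)` on the control (learning) qubit. -/
def P0 : Matrix (Fin 2) (Fin 2) ℂ := Matrix.diagonal ![1, 0]

/-- The projector `|1⟩⟨1| = diag(0,1)` on the control (learning) qubit. -/
def P1 : Matrix (Fin 2) (Fin 2) ℂ := Matrix.diagonal ![0, 1]

/-- The rank-one projector `x x†` onto a vector `x ∈ ℂ^d`. -/
def outerProj {d : ℕ} (x : Fin d → ℂ) : Matrix (Fin d) (Fin d) ℂ :=
  Matrix.vecMulVec x (star x)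

/-!
Each controlled step is an exponential: `P₁ ⊗ B` is block diagonal with blocks `0` and `B`, so
`P₀ ⊗ I + P₁ ⊗ exp B = exp (P₁ ⊗ B)`, and `U_m = exp A_m` with `A_m = P₁ ⊗ (-i t/(nM)) x⁽ᵐ⁾x⁽ᵐ⁾†`.
Since `P₁ ⊗ x x†` is an orthogonal projection, `‖A_m‖ ≤ |t|/(nM)`, so `σ = Σ ‖A_m‖ ≤ |t|/n`.

With `φ(s) = e^s - 1 - s`, induction on the number of factors bounds
`‖exp A_M ⋯ exp A_1 - 1 - Σ A_m‖` by `φ(σ)`, because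
`e^a Q - 1 - (a + S) = (e^a - 1 - a) Q + (Q - 1 - S) + a (Q - 1)` and correspondingly
`φ(α + σ) = φ(α) e^σ + φ(σ) + α (e^σ - 1)`. Hence the Trotter error of one batch is at most
`2 φ(σ) ≤ σ² e^σ`, and telescoping `aⁿ - bⁿ` with `‖a‖, ‖b‖ ≤ e^σ` gives the bound
`n σ² e^{nσ} ≤ (t²/n) e^{|t|}`.
-/

open Finset NormedSpace
open scoped Nat

theorem norm_pow_succ_sub_pow_succ_le {R : Type*} [SeminormedRing R] {a b : R} {C : ℝ}
    (ha : ‖a‖ ≤ C) (hb : ‖b‖ ≤ C) :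
    ∀ n : ℕ, ‖a ^ (n + 1) - b ^ (n + 1)‖ ≤ (n + 1) * C ^ n * ‖a - b‖
  | 0 => by simp
  | n + 1 => by
    have han : ‖a ^ (n + 1)‖ ≤ C ^ (n + 1) :=
      (norm_pow_le' a n.succ_pos).trans (pow_le_pow_left₀ (norm_nonneg a) ha _)
    calc ‖a ^ (n + 1 + 1) - b ^ (n + 1 + 1)‖
        = ‖a ^ (n + 1) * (a - b) + (a ^ (n + 1) - b ^ (n + 1)) * b‖ := by
          congr 1; rw [pow_succ a (n + 1), pow_succ b (n + 1)]; noncomm_ring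
      _ ≤ C ^ (n + 1) * ‖a - b‖ + (n + 1) * C ^ n * ‖a - b‖ * C :=
        norm_add_le_of_le (norm_mul_le_of_le han le_rfl)
          (norm_mul_le_of_le (norm_pow_succ_sub_pow_succ_le ha hb n) hb)
      _ = (↑(n + 1) + 1) * C ^ (n + 1) * ‖a - b‖ := by push_cast; ring

section NormedAlgebra

variable {𝔸 : Type*} [NormedRing 𝔸]

theorem norm_pow_le_of_norm_one_le (h1 : ‖(1 : 𝔸)‖ ≤ 1) (x : 𝔸) (k : ℕ) : ‖x ^ k‖ ≤ ‖x‖ ^ k := by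
  rcases k.eq_zero_or_pos with rfl | hk
  · simpa using h1
  · exact norm_pow_le' x hk

variable [NormedAlgebra ℝ 𝔸] [CompleteSpace 𝔸]

theorem exp_sub_sum_range_eq_tsum (x : 𝔸) (N : ℕ) :
    exp x - ∑ k ∈ range N, (k !⁻¹ : ℝ) • x ^ k = ∑' k, ((k + N)!⁻¹ : ℝ) • x ^ (k + N) := by
  rw [← (exp_series_hasSum_exp' (𝕂 := ℝ) x).tsum_eq,
    ← (expSeries_summable' (𝕂 := ℝ) x).sum_add_tsum_nat_add N, add_sub_cancel_left]

theorem Real.exp_sub_sum_range_eq_tsum (s : ℝ) (N : ℕ) :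
    Real.exp s - ∑ k ∈ range N, (k !⁻¹ : ℝ) * s ^ k = ∑' k, ((k + N)!⁻¹ : ℝ) * s ^ (k + N) := by
  simpa only [smul_eq_mul, ← Real.exp_eq_exp_ℝ] using _root_.exp_sub_sum_range_eq_tsum s N

theorem norm_exp_sub_sum_range_le (h1 : ‖(1 : 𝔸)‖ ≤ 1) (x : 𝔸) (N : ℕ) :
    ‖exp x - ∑ k ∈ range N, (k !⁻¹ : ℝ) • x ^ k‖ ≤
      Real.exp ‖x‖ - ∑ k ∈ range N, (k !⁻¹ : ℝ) * ‖x‖ ^ k := by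
  have hx := (summable_nat_add_iff N).2 (norm_expSeries_summable' (𝕂 := ℝ) x)
  have hs := (summable_nat_add_iff N).2 (expSeries_summable' (𝕂 := ℝ) ‖x‖)
  rw [exp_sub_sum_range_eq_tsum, Real.exp_sub_sum_range_eq_tsum]
  refine (norm_tsum_le_tsum_norm hx).trans (hx.tsum_le_tsum (fun k => ?_) hs)
  rw [norm_smul, norm_inv, Real.norm_natCast]
  gcongr
  exact norm_pow_le_of_norm_one_le h1 x _

theorem norm_exp_le_exp_norm (h1 : ‖(1 : 𝔸)‖ ≤ 1) (x : 𝔸) : ‖exp x‖ ≤ Real.exp ‖x‖ := by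
  simpa using norm_exp_sub_sum_range_le h1 x 0

theorem norm_exp_sub_one_sub_le (h1 : ‖(1 : 𝔸)‖ ≤ 1) (x : 𝔸) :
    ‖exp x - 1 - x‖ ≤ Real.exp ‖x‖ - 1 - ‖x‖ := by
  simpa [sum_range_succ, sub_sub] using norm_exp_sub_sum_range_le h1 x 2

theorem Real.two_mul_exp_sub_one_sub_le_sq_mul_exp {s : ℝ} (hs : 0 ≤ s) :
    2 * (Real.exp s - 1 - s) ≤ s ^ 2 * Real.exp s := by
  have hexp := (exp_series_hasSum_exp' (𝕂 := ℝ) s)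
  simp only [smul_eq_mul, ← Real.exp_eq_exp_ℝ] at hexp
  have hterm (k : ℕ) : ((k + 2)!⁻¹ : ℝ) * s ^ (k + 2) ≤ s ^ 2 / 2 * ((k !⁻¹ : ℝ) * s ^ k) := by
    have hfac : (2 * k ! : ℝ) ≤ (k + 2)! := by
      have hk : (0 : ℝ) ≤ k * k ! := by positivity
      rw [Nat.factorial_succ, Nat.factorial_succ]; push_cast; nlinarith
    calc ((k + 2)!⁻¹ : ℝ) * s ^ (k + 2) ≤ (2 * k ! : ℝ)⁻¹ * s ^ (k + 2) := by gcongr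
      _ = s ^ 2 / 2 * ((k !⁻¹ : ℝ) * s ^ k) := by ring
  have h := ((summable_nat_add_iff 2).2 hexp.summable).tsum_le_tsum hterm
    (hexp.summable.mul_left _)
  rw [tsum_mul_left, hexp.tsum_eq, ← Real.exp_sub_sum_range_eq_tsum] at h
  simp only [sum_range_succ, sum_range_zero] at h
  norm_num at h
  linarith

theorem norm_list_prod_exp_le (h1 : ‖(1 : 𝔸)‖ ≤ 1) :
    ∀ l : List 𝔸, ‖(l.map exp).prod‖ ≤ Real.exp (l.map (‖·‖)).sum
  | [] => by simpa using h1
  | a :: l => by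
    simp only [List.map_cons, List.prod_cons, List.sum_cons, Real.exp_add]
    exact norm_mul_le_of_le (norm_exp_le_exp_norm h1 a) (norm_list_prod_exp_le h1 l)

theorem norm_list_prod_exp_sub_one_sub_sum_le (h1 : ‖(1 : 𝔸)‖ ≤ 1) :
    ∀ l : List 𝔸, ‖(l.map exp).prod - 1 - l.sum‖ ≤
      Real.exp (l.map (‖·‖)).sum - 1 - (l.map (‖·‖)).sum
  | [] => by simp
  | a :: l => by
    simp only [List.map_cons, List.prod_cons, List.sum_cons]
    set Q := (l.map exp).prod
    set σ := (l.map (‖·‖)).sum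
    have hQ : ‖Q‖ ≤ Real.exp σ := norm_list_prod_exp_le h1 l
    have ih : ‖Q - 1 - l.sum‖ ≤ Real.exp σ - 1 - σ := norm_list_prod_exp_sub_one_sub_sum_le h1 l
    have hS : ‖l.sum‖ ≤ σ := List.le_sum_of_subadditive _ norm_zero.le norm_add_le l
    have hQ1 : ‖Q - 1‖ ≤ Real.exp σ - 1 := calc
      ‖Q - 1‖ = ‖(Q - 1 - l.sum) + l.sum‖ := by rw [sub_add_cancel]
      _ ≤ Real.exp σ - 1 := by linarith [norm_add_le (Q - 1 - l.sum) l.sum]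
    have ha : 0 ≤ Real.exp ‖a‖ - 1 - ‖a‖ := by linarith [Real.add_one_le_exp ‖a‖]
    calc ‖exp a * Q - 1 - (a + l.sum)‖
        = ‖(exp a - 1 - a) * Q + (Q - 1 - l.sum) + a * (Q - 1)‖ := by congr 1; noncomm_ring
      _ ≤ (Real.exp ‖a‖ - 1 - ‖a‖) * Real.exp σ + (Real.exp σ - 1 - σ) + ‖a‖ * (Real.exp σ - 1) :=
        norm_add₃_le.trans (add_le_add_three (norm_mul_le_of_le (norm_exp_sub_one_sub_le h1 a) hQ)
          ih (norm_mul_le_of_le le_rfl hQ1))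
      _ = Real.exp (‖a‖ + σ) - 1 - (‖a‖ + σ) := by rw [Real.exp_add]; ring

theorem norm_list_prod_exp_sub_exp_sum_le (h1 : ‖(1 : 𝔸)‖ ≤ 1) (l : List 𝔸) :
    ‖(l.map exp).prod - exp l.sum‖ ≤ (l.map (‖·‖)).sum ^ 2 * Real.exp (l.map (‖·‖)).sum := by
  set σ := (l.map (‖·‖)).sum
  have hσ : 0 ≤ σ := List.sum_nonneg (by simp)
  have hS : ‖l.sum‖ ≤ σ := List.le_sum_of_subadditive _ norm_zero.le norm_add_le l
  have hS2 : ‖l.sum‖ ^ 2 * Real.exp ‖l.sum‖ ≤ σ ^ 2 * Real.exp σ := by gcongr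
  calc ‖(l.map exp).prod - exp l.sum‖
      = ‖((l.map exp).prod - 1 - l.sum) - (exp l.sum - 1 - l.sum)‖ := by congr 1; abel
    _ ≤ (Real.exp σ - 1 - σ) + (Real.exp ‖l.sum‖ - 1 - ‖l.sum‖) :=
      norm_sub_le_of_le (norm_list_prod_exp_sub_one_sub_sum_le h1 l)
        (norm_exp_sub_one_sub_le h1 l.sum)
    _ ≤ σ ^ 2 * Real.exp σ := by
      linarith [Real.two_mul_exp_sub_one_sub_le_sq_mul_exp hσ,
        Real.two_mul_exp_sub_one_sub_le_sq_mul_exp (norm_nonneg l.sum)]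

theorem norm_list_prod_exp_pow_sub_exp_sum_pow_le (h1 : ‖(1 : 𝔸)‖ ≤ 1) (l : List 𝔸) (n : ℕ) :
    ‖(l.map exp).prod ^ n - exp l.sum ^ n‖ ≤
      n * (l.map (‖·‖)).sum ^ 2 * Real.exp (n * (l.map (‖·‖)).sum) := by
  cases n with
  | zero => simp
  | succ n =>
    set σ := (l.map (‖·‖)).sum
    have hS : ‖exp l.sum‖ ≤ Real.exp σ := (norm_exp_le_exp_norm h1 _).trans
      (Real.exp_le_exp.2 (List.le_sum_of_subadditive _ norm_zero.le norm_add_le l))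
    calc ‖(l.map exp).prod ^ (n + 1) - exp l.sum ^ (n + 1)‖
        ≤ (n + 1) * Real.exp σ ^ n * (σ ^ 2 * Real.exp σ) :=
          (norm_pow_succ_sub_pow_succ_le (norm_list_prod_exp_le h1 l) hS n).trans
            (by gcongr; exact norm_list_prod_exp_sub_exp_sum_le h1 l)
      _ = ↑(n + 1) * σ ^ 2 * Real.exp (↑(n + 1) * σ) := by
          rw [Real.exp_nat_mul, pow_succ]; push_cast; ring

theorem norm_ofFn_prod_exp_pow_sub_exp_sum_pow_le (h1 : ‖(1 : 𝔸)‖ ≤ 1) {M : ℕ} (A : Fin M → 𝔸)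
    {r : ℝ} (hA : ∀ m, ‖A m‖ ≤ r) (n : ℕ) :
    ‖(List.ofFn fun m => exp (A m)).reverse.prod ^ n - exp (∑ m, A m) ^ n‖ ≤
      n * (M * r) ^ 2 * Real.exp (n * (M * r)) := by
  have hσ : ((List.ofFn A).reverse.map (‖·‖)).sum ≤ M * r := by
    simp only [List.map_reverse, List.sum_reverse, List.map_ofFn, List.sum_ofFn, Function.comp_def]
    simpa using sum_le_sum fun m (_ : m ∈ univ) => hA m
  have h := norm_list_prod_exp_pow_sub_exp_sum_pow_le h1 (List.ofFn A).reverse n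
  rw [List.map_reverse, List.map_ofFn, List.sum_reverse, List.sum_ofFn] at h
  refine h.trans ?_
  gcongr
  exact List.sum_nonneg (by simp)

end NormedAlgebra

/-- `NormedSpace.map_exp` needs a `NormedAlgebra ℚ` instance, which matrix algebras do not carry. -/
theorem map_exp_of_rclike {𝕂 𝔸 𝔹 F : Type*} [RCLike 𝕂] [NormedRing 𝔸] [NormedAlgebra 𝕂 𝔸]
    [CompleteSpace 𝔸] [NormedRing 𝔹] [Algebra 𝕂 𝔹] [FunLike F 𝔸 𝔹] [RingHomClass F 𝔸 𝔹]
    (f : F) (hf : Continuous f) (x : 𝔸) : f (exp x) = exp (f x) :=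
  map_exp_of_mem_ball (𝕂 := 𝕂) f hf x ((expSeries_radius_eq_top 𝕂 𝔸).symm ▸ edist_lt_top _ _)

theorem IsStarProjection.kronecker {R m n : Type*} [CommSemiring R] [StarRing R]
    [Fintype m] [Fintype n] {A : Matrix m m R} {B : Matrix n n R}
    (hA : IsStarProjection A) (hB : IsStarProjection B) : IsStarProjection (A ⊗ₖ B) where
  isIdempotentElem := by
    rw [IsIdempotentElem, ← mul_kronecker_mul, hA.isIdempotentElem.eq, hB.isIdempotentElem.eq]
  isSelfAdjoint := by
    rw [IsSelfAdjoint, star_eq_conjTranspose, conjTranspose_kronecker, ← star_eq_conjTranspose,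
      ← star_eq_conjTranspose, hA.isSelfAdjoint.star_eq, hB.isSelfAdjoint.star_eq]

theorem isStarProjection_P1 : IsStarProjection P1 where
  isIdempotentElem := by
    rw [IsIdempotentElem, P1, diagonal_mul_diagonal]
    congr 1; ext i; fin_cases i <;> simp
  isSelfAdjoint := by
    rw [IsSelfAdjoint, P1, star_eq_conjTranspose, diagonal_conjTranspose]
    congr 1; ext i; fin_cases i <;> simp

theorem isStarProjection_outerProj {d : ℕ} {x : Fin d → ℂ} (hx : ∑ i, ‖x i‖ ^ 2 = 1) :
    IsStarProjection (outerProj x) where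
  isIdempotentElem := by
    have hdot : star x ⬝ᵥ x = 1 := by
      simp [dotProduct, Complex.conj_mul', ← Complex.ofReal_pow, ← Complex.ofReal_sum, hx]
    rw [IsIdempotentElem, outerProj, vecMulVec_mul_vecMulVec, hdot, one_smul]
  isSelfAdjoint := by
    rw [IsSelfAdjoint, outerProj, star_eq_conjTranspose, conjTranspose_vecMulVec, star_star]

theorem norm_P1_kronecker_smul_outerProj_le {d : ℕ} {x : Fin d → ℂ} (hx : ∑ i, ‖x i‖ ^ 2 = 1)
    (c : ℂ) : ‖P1 ⊗ₖ (c • outerProj x)‖ ≤ ‖c‖ := by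
  rw [kronecker_smul]
  exact (norm_smul_le _ _).trans (mul_le_of_le_one_right (norm_nonneg c)
    (isStarProjection_P1.kronecker (isStarProjection_outerProj hx)).norm_le)

theorem P0_kronecker_add_P1_kronecker {n : Type*} [Fintype n] [DecidableEq n]
    (X Y : Matrix n n ℂ) :
    P0 ⊗ₖ X + P1 ⊗ₖ Y = reindexAlgEquiv ℂ ℂ (.prodComm n (Fin 2)) (blockDiagonal ![X, Y]) := by
  rw [P0, P1, diagonal_kronecker, diagonal_kronecker, ← coe_reindexAlgEquiv ℂ ℂ, ← map_add,
    ← blockDiagonal_add]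
  congr 2; ext i : 1; fin_cases i <;> simp

theorem exp_P0_kronecker_add_P1_kronecker {n : Type*} [Fintype n] [DecidableEq n]
    (X Y : Matrix n n ℂ) :
    exp (P0 ⊗ₖ X + P1 ⊗ₖ Y) = P0 ⊗ₖ exp X + P1 ⊗ₖ exp Y := by
  rw [P0_kronecker_add_P1_kronecker, P0_kronecker_add_P1_kronecker,
    ← map_exp_of_rclike (𝕂 := ℂ) _ (continuous_id.matrix_reindex _ _), Matrix.exp_blockDiagonal]
  congr 2; ext i : 1
  rw [← Pi.evalRingHom_apply (fun _ ↦ Matrix n n ℂ) i (exp _),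
    map_exp_of_rclike (𝕂 := ℂ) _ (continuous_apply i)]
  fin_cases i <;> rfl

theorem exp_P1_kronecker {d : ℕ} (B : Matrix (Fin d) (Fin d) ℂ) :
    exp (P1 ⊗ₖ B) = P0 ⊗ₖ 1 + P1 ⊗ₖ exp B := by
  simpa using exp_P0_kronecker_add_P1_kronecker 0 B

theorem bcQSE_unitary_approx_general (d M : ℕ)
    (x : Fin M → Fin d → ℂ) (hx : ∀ m, ∑ i, ‖x m i‖ ^ 2 = 1)
    (t : ℝ) (n : ℕ) (hn : 1 ≤ n) :
    ‖((List.ofFn fun m =>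
          P0 ⊗ₖ (1 : Matrix (Fin d) (Fin d) ℂ) +
            P1 ⊗ₖ NormedSpace.exp
              ((-(Complex.I * ((t : ℂ) / ((n : ℂ) * (M : ℂ))))) • outerProj (x m))).reverse.prod) ^ n -
        NormedSpace.exp ((-(Complex.I * (t : ℂ))) •
          (P1 ⊗ₖ ((M : ℂ)⁻¹ • ∑ m, outerProj (x m))))‖ ≤
      (t ^ 2 / (n : ℝ)) * Real.exp |t| := by
  set c : ℂ := -(Complex.I * ((t : ℂ) / ((n : ℂ) * (M : ℂ))))
  have hn0 : n ≠ 0 := by omega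
  have hexponent : (-(Complex.I * (t : ℂ))) • (P1 ⊗ₖ ((M : ℂ)⁻¹ • ∑ m, outerProj (x m))) =
      n • ∑ m, P1 ⊗ₖ (c • outerProj (x m)) := by
    have hcoeff : (n : ℂ) * c = -(Complex.I * t) * (M : ℂ)⁻¹ := by
      simp only [c]; field_simp
    have hsum : P1 ⊗ₖ ∑ m, outerProj (x m) = ∑ m, P1 ⊗ₖ outerProj (x m) :=
      map_sum (kroneckerBilinear (R := ℂ) P1) _ _
    simp_rw [kronecker_smul, ← smul_sum, ← hsum, ← Nat.cast_smul_eq_nsmul ℂ, smul_smul, hcoeff]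
  have hA (m : Fin M) : ‖P1 ⊗ₖ (c • outerProj (x m))‖ ≤ |t| / (n * M) :=
    (norm_P1_kronecker_smul_outerProj_le (hx m) c).trans_eq (by simp [c])
  rw [hexponent, Matrix.exp_nsmul]
  simp_rw [← exp_P1_kronecker]
  calc _ ≤ n * (M * (|t| / (n * M))) ^ 2 * Real.exp (n * (M * (|t| / (n * M)))) :=
        norm_ofFn_prod_exp_pow_sub_exp_sum_pow_le (IsStarProjection.norm_le _ (.one _)) _ hA n
    _ ≤ n * (|t| / n) ^ 2 * Real.exp (n * (|t| / n)) := by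
        have hM : M * (|t| / (n * M)) ≤ |t| / n := calc
          _ = |t| / n * (M / M) := by ring
          _ ≤ |t| / n := mul_le_of_le_one_right (by positivity) (div_self_le_one _)
        gcongr
    _ = t ^ 2 / n * Real.exp |t| := by
        rw [mul_div_cancel₀ _ (by exact_mod_cast hn0), div_pow, sq_abs]; field_simp

/-- bcQSE unitary approximation: for unit vectors `x⁽¹⁾, …, x⁽ᴹ⁾` with ensemble
`ρ = (1/M) Σ_m x⁽ᵐ⁾(x⁽ᵐ⁾)†` and controlled batch unitaries
`U_m = P₀ ⊗ I + P₁ ⊗ exp(−i(t/(nM)) x⁽ᵐ⁾(x⁽ᵐ⁾)†)`, one has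
`‖(U_M⋯U₁)^n − exp(−it(P₁ ⊗ ρ))‖ ≤ (t²/n)·e^{|t|}`. -/
theorem bcQSE_unitary_approx (d M : ℕ) (hM : 1 ≤ M)
    (x : Fin M → Fin d → ℂ) (hx : ∀ m, ∑ i, ‖x m i‖ ^ 2 = 1)
    (t : ℝ) (n : ℕ) (hn : 1 ≤ n) :
    ‖((List.ofFn fun m =>
          P0 ⊗ₖ (1 : Matrix (Fin d) (Fin d) ℂ) +
            P1 ⊗ₖ NormedSpace.exp
              ((-(Complex.I * ((t : ℂ) / ((n : ℂ) * (M : ℂ))))) • outerProj (x m))).reverse.prod) ^ n -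
        NormedSpace.exp ((-(Complex.I * (t : ℂ))) •
          (P1 ⊗ₖ ((M : ℂ)⁻¹ • ∑ m, outerProj (x m))))‖ ≤
      (t ^ 2 / (n : ℝ)) * Real.exp |t| :=
  bcQSE_unitary_approx_general d M x hx t n hn
end

section
/- There exists a finite sequence of 12 unitary 4×4 matrices, each of which is either the CNOT gate or of the form I₂ ⊗ g with g ∈ {H, S, S†, T, T†}, such that the product of the sequence equals the controlled-exp(−i(π/4)Y) gate P₀ ⊗ I₂ + P₁ ⊗ exp(−i(π/4)Y), and such that the sequence contains exactly 4 factors I₂ ⊗ H, 4 factors from {I₂ ⊗ S, I₂ ⊗ S†}, 2 factors from {I₂ ⊗ T, I₂ ⊗ T†}, and 2 CNOT gates. -/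
open Matrix Kronecker
open scoped Classical

/-- The Hadamard gate. -/
noncomputable def Hgate : Matrix (Fin 2) (Fin 2) ℂ :=
  ((Real.sqrt 2 : ℂ))⁻¹ • !![1, 1; 1, -1]

/-- The phase gate `S = diag(1, i)`. -/
def Sgate : Matrix (Fin 2) (Fin 2) ℂ := !![1, 0; 0, Complex.I]

/-- The `π/8` gate `T = diag(1, e^{iπ/4})`. -/
noncomputable def Tgate : Matrix (Fin 2) (Fin 2) ℂ :=
  !![1, 0; 0, Complex.exp (Complex.I * (Real.pi / 4))]

/-- The Pauli-Y matrix. -/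
def Ygate : Matrix (Fin 2) (Fin 2) ℂ := !![0, -Complex.I; Complex.I, 0]

/-- The CNOT gate, mapping `|a⟩⊗|b⟩` to `|a⟩⊗|b⊕a⟩` (first qubit is the control). -/
def CNOT : Matrix (Fin 2 × Fin 2) (Fin 2 × Fin 2) ℂ :=
  Matrix.of fun r c => if r.1 = c.1 ∧ r.2 = c.2 + c.1 then 1 else 0

/-- The two-qubit gate described by `d`: `none` is the CNOT gate and `some g` is
`I₂ ⊗ g` (the single-qubit gate `g` on the second qubit). -/
noncomputable def realize : Option (Matrix (Fin 2) (Fin 2) ℂ) →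
    Matrix (Fin 2 × Fin 2) (Fin 2 × Fin 2) ℂ
  | none => CNOT
  | some g => (1 : Matrix (Fin 2) (Fin 2) ℂ) ⊗ₖ g

/-!
Both kinds of gate are block diagonal with respect to the control qubit: `I₂ ⊗ g` acts as `g`
in both blocks, and CNOT acts as `I₂` in the `P₀` block and as `X` in the `P₁` block. Hence a
circuit acts as `P₀ ⊗ w₀ + P₁ ⊗ w₁`, where `w₁` is the word of single-qubit gates with `X` in
place of each CNOT and `w₀` is the same word with the CNOTs dropped.
For `W = HSHS` the product `(I₂ ⊗ W) · CNOT · (I₂ ⊗ T) · CNOT · (I₂ ⊗ T†) · (I₂ ⊗ W†)` has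
`w₀ = W T T† W† = I₂` and `w₁ = W (X T X T†) W† = W exp(iπZ/4) W† = exp(iπ/4 · W Z W†)`,
which is `exp(−iπY/4)` because `W Z W† = −Y`.
-/

def Xgate : Matrix (Fin 2) (Fin 2) ℂ := !![0, 1; 1, 0]

def Zgate : Matrix (Fin 2) (Fin 2) ℂ := !![1, 0; 0, -1]

def phaseGate (z : ℂ) : Matrix (Fin 2) (Fin 2) ℂ := !![1, 0; 0, z]

theorem P0_add_P1 : P0 + P1 = 1 := by
  ext i j
  fin_cases i <;> fin_cases j <;> simp [P0, P1]

theorem P0_mul_P1 : P0 * P1 = 0 := by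
  ext i j
  fin_cases i <;> fin_cases j <;> simp [P0, P1]

theorem P1_mul_P0 : P1 * P0 = 0 := by
  ext i j
  fin_cases i <;> fin_cases j <;> simp [P0, P1]

theorem P0_mul_P0 : P0 * P0 = P0 := by
  simp [P0]

theorem P1_mul_P1 : P1 * P1 = P1 := by
  simp [P1]

def controlled {n : Type*} [Fintype n] [DecidableEq n] :
    Matrix n n ℂ × Matrix n n ℂ →* Matrix (Fin 2 × n) (Fin 2 × n) ℂ where
  toFun A := P0 ⊗ₖ A.1 + P1 ⊗ₖ A.2
  map_one' := by rw [Prod.fst_one, Prod.snd_one, ← add_kronecker, P0_add_P1, one_kronecker_one]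
  map_mul' A B := by
    simp only [Prod.fst_mul, Prod.snd_mul, add_mul, mul_add, ← mul_kronecker_mul, P0_mul_P0,
      P0_mul_P1, P1_mul_P0, P1_mul_P1, zero_kronecker, add_zero, zero_add]

def targetActions :
    Option (Matrix (Fin 2) (Fin 2) ℂ) → Matrix (Fin 2) (Fin 2) ℂ × Matrix (Fin 2) (Fin 2) ℂ
  | none => (1, Xgate)
  | some g => (g, g)

theorem CNOT_eq_controlled : CNOT = controlled (1, Xgate) := by
  ext ⟨i, j⟩ ⟨k, l⟩
  fin_cases i <;> fin_cases j <;> fin_cases k <;> fin_cases l <;>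
    simp [controlled, CNOT, P0, P1, Xgate, one_apply]

theorem realize_eq_controlled (d : Option (Matrix (Fin 2) (Fin 2) ℂ)) :
    realize d = controlled (targetActions d) := by
  cases d with
  | none => exact CNOT_eq_controlled
  | some g =>
    change 1 ⊗ₖ g = P0 ⊗ₖ g + P1 ⊗ₖ g
    rw [← add_kronecker, P0_add_P1]

theorem prod_realize {m : ℕ} (f : Fin m → Option (Matrix (Fin 2) (Fin 2) ℂ)) :
    (List.ofFn fun k => realize (f k)).prod =
      controlled (List.ofFn fun k => targetActions (f k)).prod := by
  simp only [realize_eq_controlled, map_list_prod, List.map_ofFn, Function.comp_def]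

theorem phaseGate_conjTranspose (z : ℂ) : (phaseGate z)ᴴ = phaseGate (star z) := by
  ext i j
  fin_cases i <;> fin_cases j <;> simp [phaseGate]

theorem phaseGate_mul_phaseGate (z w : ℂ) : phaseGate z * phaseGate w = phaseGate (z * w) := by
  ext i j
  fin_cases i <;> fin_cases j <;> simp [phaseGate]

theorem phaseGate_one : phaseGate 1 = 1 := by
  ext i j
  fin_cases i <;> fin_cases j <;> simp [phaseGate]

theorem phaseGate_mem_unitaryGroup {z : ℂ} (hz : ‖z‖ = 1) :
    phaseGate z ∈ unitaryGroup (Fin 2) ℂ := by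
  rw [mem_unitaryGroup_iff, star_eq_conjTranspose, phaseGate_conjTranspose,
    phaseGate_mul_phaseGate, Complex.star_def, Complex.mul_conj', hz]
  simp [phaseGate_one]

theorem Xgate_mul_phaseGate_mul_Xgate_mul_phaseGate (z w : ℂ) :
    Xgate * phaseGate z * Xgate * phaseGate w = diagonal ![z, w] := by
  ext i j
  fin_cases i <;> fin_cases j <;> simp [Xgate, phaseGate]

theorem Sgate_eq_phaseGate : Sgate = phaseGate Complex.I := rfl

theorem Tgate_eq_phaseGate :
    Tgate = phaseGate (Complex.exp (Complex.I * (Real.pi / 4))) := rfl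

theorem Hgate_conjTranspose : Hgateᴴ = Hgate := by
  ext i j
  fin_cases i <;> fin_cases j <;> simp [Hgate, ← Complex.ofReal_inv]

theorem Hgate_mul_mul_Hgate (A : Matrix (Fin 2) (Fin 2) ℂ) :
    Hgate * A * Hgate = (2 : ℂ)⁻¹ • (!![1, 1; 1, -1] * A * !![1, 1; 1, -1]) := by
  have h : ((Real.sqrt 2 : ℂ))⁻¹ * ((Real.sqrt 2 : ℂ))⁻¹ = 2⁻¹ := by
    rw [← mul_inv, ← Complex.ofReal_mul, Real.mul_self_sqrt zero_le_two]
    norm_num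
  rw [Hgate, Matrix.smul_mul, Matrix.mul_smul, Matrix.smul_mul, smul_smul, h]

theorem Hgate_mul_Hgate : Hgate * Hgate = 1 := by
  have h := Hgate_mul_mul_Hgate 1
  rw [mul_one] at h
  rw [h]
  ext i j
  fin_cases i <;> fin_cases j <;> norm_num [mul_apply, Fin.sum_univ_two]

theorem Hgate_mem_unitaryGroup : Hgate ∈ unitaryGroup (Fin 2) ℂ := by
  rw [mem_unitaryGroup_iff, star_eq_conjTranspose, Hgate_conjTranspose, Hgate_mul_Hgate]

theorem Sgate_mem_unitaryGroup : Sgate ∈ unitaryGroup (Fin 2) ℂ :=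
  phaseGate_mem_unitaryGroup Complex.norm_I

theorem Tgate_mem_unitaryGroup : Tgate ∈ unitaryGroup (Fin 2) ℂ :=
  phaseGate_mem_unitaryGroup (by simpa using Complex.norm_exp_I_mul_ofReal (Real.pi / 4))

theorem conj_mul_eq_conj_conj {m α : Type*} [Fintype m] [CommSemiring α] [StarRing α]
    (A B M : Matrix m m α) :
    A * B * M * (A * B)ᴴ = A * (B * M * Bᴴ) * Aᴴ := by
  simp only [conjTranspose_mul, mul_assoc]

theorem Sgate_mul_Zgate_mul_conjTranspose : Sgate * Zgate * Sgateᴴ = Zgate := by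
  ext i j
  fin_cases i <;> fin_cases j <;> simp [Sgate, Zgate, mul_apply, Fin.sum_univ_two]

theorem Hgate_mul_Zgate_mul_conjTranspose : Hgate * Zgate * Hgateᴴ = Xgate := by
  rw [Hgate_conjTranspose, Hgate_mul_mul_Hgate]
  ext i j
  fin_cases i <;> fin_cases j <;> norm_num [Zgate, Xgate, mul_apply, Fin.sum_univ_two]

theorem Sgate_mul_Xgate_mul_conjTranspose : Sgate * Xgate * Sgateᴴ = Ygate := by
  ext i j
  fin_cases i <;> fin_cases j <;> simp [Sgate, Xgate, Ygate, mul_apply, Fin.sum_univ_two]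

theorem Hgate_mul_Ygate_mul_conjTranspose : Hgate * Ygate * Hgateᴴ = -Ygate := by
  rw [Hgate_conjTranspose, Hgate_mul_mul_Hgate]
  ext i j
  fin_cases i <;> fin_cases j <;> norm_num [Ygate, mul_apply, Fin.sum_univ_two] <;> ring

noncomputable def basisChangeZY : Matrix (Fin 2) (Fin 2) ℂ := Hgate * Sgate * Hgate * Sgate

theorem basisChangeZY_mem_unitaryGroup : basisChangeZY ∈ unitaryGroup (Fin 2) ℂ :=
  mul_mem (mul_mem (mul_mem Hgate_mem_unitaryGroup Sgate_mem_unitaryGroup)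
    Hgate_mem_unitaryGroup) Sgate_mem_unitaryGroup

theorem basisChangeZY_mul_Zgate_mul_conjTranspose :
    basisChangeZY * Zgate * basisChangeZYᴴ = -Ygate := by
  rw [basisChangeZY, conj_mul_eq_conj_conj, Sgate_mul_Zgate_mul_conjTranspose,
    conj_mul_eq_conj_conj, Hgate_mul_Zgate_mul_conjTranspose, conj_mul_eq_conj_conj,
    Sgate_mul_Xgate_mul_conjTranspose, Hgate_mul_Ygate_mul_conjTranspose]

theorem exp_conj_of_mem_unitaryGroup {m 𝔸 : Type*} [Fintype m] [DecidableEq m]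
    [NormedCommRing 𝔸] [NormedAlgebra ℚ 𝔸] [CompleteSpace 𝔸] [StarRing 𝔸] {U : Matrix m m 𝔸}
    (hU : U ∈ unitaryGroup m 𝔸) (A : Matrix m m 𝔸) :
    NormedSpace.exp (U * A * Uᴴ) = U * NormedSpace.exp A * Uᴴ :=
  exp_units_conj (Unitary.toUnits ⟨U, hU⟩) A

theorem exp_smul_Zgate (c : ℂ) :
    NormedSpace.exp (c • Zgate) = diagonal ![Complex.exp c, Complex.exp (-c)] := by
  have h : c • Zgate = diagonal ![c, -c] := by
    ext i j
    fin_cases i <;> fin_cases j <;> simp [Zgate]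
  rw [h, exp_diagonal]
  congr 1
  ext i
  fin_cases i <;> simp [Complex.exp_eq_exp_ℂ]

theorem Xgate_mul_Tgate_mul_Xgate_mul_Tgate_conjTranspose :
    Xgate * Tgate * Xgate * Tgateᴴ =
      NormedSpace.exp ((Complex.I * (Real.pi / 4)) • Zgate) := by
  rw [Tgate_eq_phaseGate, phaseGate_conjTranspose, Xgate_mul_phaseGate_mul_Xgate_mul_phaseGate,
    exp_smul_Zgate, Complex.star_def, ← Complex.exp_conj]
  simp [Complex.conj_ofReal, map_ofNat]

theorem basisChangeZY_conj_Tgate_mul_Tgate_conjTranspose :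
    basisChangeZY * (Tgate * Tgateᴴ) * basisChangeZYᴴ = 1 := by
  rw [← star_eq_conjTranspose, ← star_eq_conjTranspose,
    mem_unitaryGroup_iff.mp Tgate_mem_unitaryGroup,
    mul_one, mem_unitaryGroup_iff.mp basisChangeZY_mem_unitaryGroup]

theorem basisChangeZY_conj_Xgate_Tgate_Xgate_Tgate_conjTranspose :
    basisChangeZY * (Xgate * Tgate * Xgate * Tgateᴴ) * basisChangeZYᴴ =
      NormedSpace.exp ((-(Complex.I * ((Real.pi : ℂ) / 4))) • Ygate) := by
  rw [Xgate_mul_Tgate_mul_Xgate_mul_Tgate_conjTranspose,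
    ← exp_conj_of_mem_unitaryGroup basisChangeZY_mem_unitaryGroup, Matrix.mul_smul,
    Matrix.smul_mul, basisChangeZY_mul_Zgate_mul_conjTranspose, smul_neg, neg_smul]

noncomputable def ctrlExpYCircuit : Fin 12 → Option (Matrix (Fin 2) (Fin 2) ℂ) :=
  ![some Hgate, some Sgate, some Hgate, some Sgate, none, some Tgate, none, some Tgateᴴ,
    some Sgateᴴ, some Hgate, some Sgateᴴ, some Hgate]

theorem prod_realize_ctrlExpYCircuit :
    (List.ofFn fun k => realize (ctrlExpYCircuit k)).prod =
      controlled (basisChangeZY * (Tgate * Tgateᴴ) * basisChangeZYᴴ,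
        basisChangeZY * (Xgate * Tgate * Xgate * Tgateᴴ) * basisChangeZYᴴ) := by
  rw [prod_realize]
  simp [ctrlExpYCircuit, targetActions, List.ofFn_succ, basisChangeZY, conjTranspose_mul,
    Hgate_conjTranspose, mul_assoc]

theorem phaseGate_ne_Hgate (z : ℂ) : phaseGate z ≠ Hgate := fun h => by
  have h01 : (0 : ℂ) = Real.sqrt 2 := by simpa [phaseGate, Hgate] using congrFun (congrFun h 0) 1
  exact (Real.sqrt_pos.mpr two_pos).ne (Complex.ofReal_injective (by simpa using h01))

theorem ne_of_one_one_pow_four {A B : Matrix (Fin 2) (Fin 2) ℂ} (hA : A 1 1 ^ 4 = 1)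
    (hB : B 1 1 ^ 4 = -1) : A ≠ B := fun h => by
  rw [h, hB] at hA
  norm_num at hA

theorem Sgate_one_one_pow_four : Sgate 1 1 ^ 4 = 1 := by
  simp [Sgate]

theorem Sgate_conjTranspose_one_one_pow_four : Sgateᴴ 1 1 ^ 4 = 1 := by
  rw [conjTranspose_apply, ← star_pow, Sgate_one_one_pow_four, star_one]

theorem Tgate_one_one_pow_four : Tgate 1 1 ^ 4 = -1 := by
  rw [Tgate_eq_phaseGate]
  simp only [phaseGate, of_apply, cons_val_one, cons_val_zero]
  rw [← Complex.exp_nat_mul, ← Complex.exp_pi_mul_I]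
  ring_nf

theorem Tgate_conjTranspose_one_one_pow_four : Tgateᴴ 1 1 ^ 4 = -1 := by
  rw [conjTranspose_apply, ← star_pow, Tgate_one_one_pow_four, star_neg, star_one]

theorem ctrlExpYCircuit_gate_counts :
    (Finset.univ.filter fun k : Fin 12 => ctrlExpYCircuit k = some Hgate).card = 4 ∧
      (Finset.univ.filter fun k : Fin 12 =>
          ctrlExpYCircuit k = some Sgate ∨ ctrlExpYCircuit k = some Sgateᴴ).card = 4 ∧
      (Finset.univ.filter fun k : Fin 12 =>
          ctrlExpYCircuit k = some Tgate ∨ ctrlExpYCircuit k = some Tgateᴴ).card = 2 ∧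
      (Finset.univ.filter fun k : Fin 12 => ctrlExpYCircuit k = none).card = 2 := by
  obtain ⟨hSH, hS'H, hTH, hT'H⟩ :
      Sgate ≠ Hgate ∧ Sgateᴴ ≠ Hgate ∧ Tgate ≠ Hgate ∧ Tgateᴴ ≠ Hgate := by
    simp only [Sgate_eq_phaseGate, Tgate_eq_phaseGate, phaseGate_conjTranspose]
    exact ⟨phaseGate_ne_Hgate _, phaseGate_ne_Hgate _, phaseGate_ne_Hgate _,
      phaseGate_ne_Hgate _⟩
  have hST := ne_of_one_one_pow_four Sgate_one_one_pow_four Tgate_one_one_pow_four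
  have hST' := ne_of_one_one_pow_four Sgate_one_one_pow_four
    Tgate_conjTranspose_one_one_pow_four
  have hS'T := ne_of_one_one_pow_four Sgate_conjTranspose_one_one_pow_four
    Tgate_one_one_pow_four
  have hS'T' := ne_of_one_one_pow_four Sgate_conjTranspose_one_one_pow_four
    Tgate_conjTranspose_one_one_pow_four
  refine ⟨?_, ?_, ?_, ?_⟩ <;> rw [Finset.card_filter] <;>
    simp only [Fin.sum_univ_succ, Fin.sum_univ_zero] <;>
    simp [ctrlExpYCircuit, hSH, hS'H, hTH, hT'H, hSH.symm, hS'H.symm, hTH.symm, hT'H.symm,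
      hST, hST', hS'T, hS'T', hST.symm, hST'.symm, hS'T.symm]

/-- Clifford+T decomposition of the controlled `exp(−i(π/4)Y)` gate with gate count
`(H, S/S†, CNOT, T/T†) = (4, 4, 2, 2)`: a sequence of 12 gates, each the CNOT gate or
`I₂ ⊗ g` with `g ∈ {H, S, S†, T, T†}`, whose product is
`P₀ ⊗ I₂ + P₁ ⊗ exp(−i(π/4)Y)`, with exactly 4 factors `I₂ ⊗ H`, 4 factors from
`{I₂ ⊗ S, I₂ ⊗ S†}`, 2 factors from `{I₂ ⊗ T, I₂ ⊗ T†}`, and 2 CNOT gates. -/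
theorem ctrl_exp_Y_clifford_T_decomposition :
    ∃ f : Fin 12 → Option (Matrix (Fin 2) (Fin 2) ℂ),
      (∀ k g, f k = some g →
          g = Hgate ∨ g = Sgate ∨ g = Sgateᴴ ∨ g = Tgate ∨ g = Tgateᴴ) ∧
      (List.ofFn fun k => realize (f k)).prod =
        P0 ⊗ₖ (1 : Matrix (Fin 2) (Fin 2) ℂ) +
          P1 ⊗ₖ NormedSpace.exp ((-(Complex.I * ((Real.pi : ℂ) / 4))) • Ygate) ∧
      (Finset.univ.filter fun k : Fin 12 => f k = some Hgate).card = 4 ∧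
      (Finset.univ.filter fun k : Fin 12 =>
          f k = some Sgate ∨ f k = some Sgateᴴ).card = 4 ∧
      (Finset.univ.filter fun k : Fin 12 =>
          f k = some Tgate ∨ f k = some Tgateᴴ).card = 2 ∧
      (Finset.univ.filter fun k : Fin 12 => f k = none).card = 2 := by
  refine ⟨ctrlExpYCircuit, ?_, ?_, ctrlExpYCircuit_gate_counts⟩
  · intro k g hk
    fin_cases k <;> simp [ctrlExpYCircuit] at hk <;> simp [← hk]
  · rw [prod_realize_ctrlExpYCircuit, basisChangeZY_conj_Tgate_mul_Tgate_conjTranspose,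
      basisChangeZY_conj_Xgate_Tgate_Xgate_Tgate_conjTranspose]
    rfl
end
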